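/- Let F = { y ∈ R^m : X(y) ⪰ 0 } with X(y) = X + Σ_k y_k M^k affine into symmetric matrices, let x ∈ F, and let U be a matrix whose columns form an orthonormal basis of the null space of X(x). Then the affine hull of face(x), the minimal face of F containing x, equals { y ∈ R^m : X(y) U = 0 }. -/

import Mathlib

open Matrix BigOperators

/-- `A` is a (nonempty, convex) face of the convex set `F`. -/
def IsFaceOf {E : Type*} [AddCommGroup E] [Module ℝ E] (F A : Set E) : Prop :=
  Convex ℝ A ∧ IsExtreme ℝ F A

/-- `A` is the minimal face of `F` containing the set `S`. -/
def IsMinFaceOf {E : Type*} [AddCommGroup E] [Module ℝ E] (F S A : Set E) : Prop :=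
  IsFaceOf F A ∧ S ⊆ A ∧ ∀ B, IsFaceOf F B → S ⊆ B → A ⊆ B

/-!
Let `L = {y | X(y) U = 0}`. Then `F ∩ L` is a face of `F` containing `x`, being the preimage of
the face `{Z ⪰ 0 | Z U = 0}` of the positive semidefinite cone. The point `x` can be pushed a
little beyond itself along every direction `d` of `L`: with `Π = U Uᴴ` the projection onto
`ker X(x)`, the matrix `X(x) + Π` is positive definite, so `X(x) + Π + t Q ⪰ 0` for small `t > 0`,
and conjugating by `1 - Π` gives `X(x + t d) = X(x) + t Q ⪰ 0`, where `Q = X(x + d) - X(x)`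
vanishes on the range of `Π`. Hence every point of `F ∩ L` is the end of an open segment in `F`
through `x`, so `F ∩ L` is the minimal face, and every point of `L` lies on a line through `x`
and another point of `F ∩ L`, so `L` is its affine hull.
-/

open scoped MatrixOrder ComplexOrder

namespace Matrix

variable {n k 𝕜 : Type*} [RCLike 𝕜]

lemma convex_setOf_posSemidef : Convex ℝ {A : Matrix n n 𝕜 | A.PosSemidef} :=
  fun _ hA _ hB _ _ ha hb _ => (hA.smul ha).add (hB.smul hb)

variable [Fintype n] [Fintype k]

lemma mul_eq_zero_of_range_le_ker {P : Matrix n n 𝕜} {U : Matrix n k 𝕜}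
    (h : LinearMap.range U.mulVecLin ≤ LinearMap.ker P.mulVecLin) : P * U = 0 := by
  refine ext_iff_mulVec.mpr fun a => ?_
  rw [← mulVec_mulVec, zero_mulVec]
  exact h (LinearMap.mem_range_self _ a)

lemma IsHermitian.mul_conjTranspose_mul_eq_zero {A : Matrix n n 𝕜} {U : Matrix n k 𝕜}
    (hA : A.IsHermitian) (hAU : A * U = 0) : U * Uᴴ * A = 0 := by
  rw [Matrix.mul_assoc, ← hA.eq, ← conjTranspose_mul, hAU, conjTranspose_zero, Matrix.mul_zero]

lemma PosSemidef.mul_eq_zero_of_le {A B : Matrix n n 𝕜} {U : Matrix n k 𝕜} (hA : A.PosSemidef)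
    (hAB : A ≤ B) (hBU : B * U = 0) : A * U = 0 := by
  refine ext_iff_mulVec.mpr fun w => ?_
  rw [← mulVec_mulVec, zero_mulVec]
  have hB : B *ᵥ (U *ᵥ w) = 0 := by rw [mulVec_mulVec, hBU, zero_mulVec]
  refine (hA.dotProduct_mulVec_zero_iff _).mp (le_antisymm ?_ (hA.dotProduct_mulVec_nonneg _))
  have := (le_iff.mp hAB).dotProduct_mulVec_nonneg (U *ᵥ w)
  rwa [sub_mulVec, hB, zero_sub, dotProduct_neg, neg_nonneg] at this

lemma isExtreme_setOf_posSemidef_mul_eq_zero (U : Matrix n k 𝕜) :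
    IsExtreme ℝ {A : Matrix n n 𝕜 | A.PosSemidef} {A | A.PosSemidef ∧ A * U = 0} := by
  refine ⟨fun _ hA => hA.1, ?_⟩
  rintro A hA B hB _ ⟨-, hU⟩ ⟨a, b, ha, hb, -, rfl⟩
  refine ⟨hA, ?_⟩
  have h := (hA.smul ha.le).mul_eq_zero_of_le (le_iff.mpr (by simpa using hB.smul hb.le)) hU
  rwa [Matrix.smul_mul, smul_eq_zero, or_iff_right ha.ne'] at h

variable [DecidableEq n]

lemma PosDef.exists_pos_posSemidef_add_smul {G Q : Matrix n n 𝕜} (hG : G.PosDef)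
    (hQ : Q.IsHermitian) : ∃ t : ℝ, 0 < t ∧ (G + t • Q).PosSemidef := by
  rcases isEmpty_or_nonempty n with hn | hn
  · exact ⟨1, one_pos, Subsingleton.elim 0 (G + (1 : ℝ) • Q) ▸ .zero⟩
  obtain ⟨r, hr, hrG⟩ :=
    (CFC.exists_pos_algebraMap_le_iff hG.isStrictlyPositive.isSelfAdjoint).2
      fun _ => hG.isStrictlyPositive.spectrum_pos
  obtain ⟨b, hb⟩ := (isCompact_iff_compactSpace.mpr inferInstance :
    IsCompact (spectrum ℝ Q)).bddBelow
  have hbQ : algebraMap ℝ _ b ≤ Q := (algebraMap_le_iff_le_spectrum hQ.isSelfAdjoint).2 hb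
  set t := r / (|b| + 1)
  have ht : 0 < t := by positivity
  have hrtb : 0 ≤ r + t * b := by
    have : t * |b| ≤ r := by
      rw [div_mul_eq_mul_div, div_le_iff₀ (by positivity)]
      nlinarith [abs_nonneg b]
    nlinarith [neg_abs_le b]
  refine ⟨t, ht, ?_⟩
  -- `G + t Q = (G - r) + t (Q - b) + (r + t b) ⪰ 0`
  convert ((le_iff.mp hrG).add ((le_iff.mp hbQ).smul ht.le)).add (PosSemidef.one.smul hrtb)
    using 1
  simp only [Algebra.algebraMap_eq_smul_one, smul_sub, add_smul, smul_smul]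
  abel

variable [DecidableEq k]

lemma PosSemidef.posDef_add_mul_conjTranspose {P : Matrix n n 𝕜} {U : Matrix n k 𝕜}
    (hP : P.PosSemidef) (hU : Uᴴ * U = 1)
    (hker : LinearMap.ker P.mulVecLin ≤ LinearMap.range U.mulVecLin) :
    (P + U * Uᴴ).PosDef := by
  have hUU : (U * Uᴴ).PosSemidef := posSemidef_self_mul_conjTranspose U
  refine (hP.add hUU).posDef_iff_isUnit.mpr (mulVec_injective_iff_isUnit.mp ?_)
  refine (injective_iff_map_eq_zero (P + U * Uᴴ).mulVecLin).mpr fun v hv => ?_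
  have h0 : star v ⬝ᵥ P *ᵥ v + star v ⬝ᵥ (U * Uᴴ) *ᵥ v = 0 := by
    rw [← dotProduct_add, ← add_mulVec, ← mulVecLin_apply, hv, dotProduct_zero]
  obtain ⟨hPv, hUv⟩ := (add_eq_zero_iff_of_nonneg (hP.dotProduct_mulVec_nonneg v)
    (hUU.dotProduct_mulVec_nonneg v)).mp h0
  obtain ⟨a, rfl⟩ := hker ((hP.dotProduct_mulVec_zero_iff v).mp hPv)
  calc U *ᵥ a = (U * Uᴴ) *ᵥ (U *ᵥ a) := by
        rw [mulVec_mulVec, Matrix.mul_assoc, hU, Matrix.mul_one]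
    _ = 0 := (hUU.dotProduct_mulVec_zero_iff _).mp hUv

lemma PosSemidef.exists_pos_posSemidef_add_smul {P Q : Matrix n n 𝕜} {U : Matrix n k 𝕜}
    (hP : P.PosSemidef) (hQ : Q.IsHermitian) (hU : Uᴴ * U = 1)
    (hker : LinearMap.ker P.mulVecLin = LinearMap.range U.mulVecLin) (hQU : Q * U = 0) :
    ∃ t : ℝ, 0 < t ∧ (P + t • Q).PosSemidef := by
  have hPU : P * U = 0 := mul_eq_zero_of_range_le_ker hker.ge
  obtain ⟨t, ht, hGQ⟩ :=
    (hP.posDef_add_mul_conjTranspose hU hker.le).exists_pos_posSemidef_add_smul hQ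
  refine ⟨t, ht, ?_⟩
  have hproj : U * Uᴴ * (U * Uᴴ) = U * Uᴴ := by
    rw [Matrix.mul_assoc, ← Matrix.mul_assoc Uᴴ, hU, Matrix.one_mul]
  have hR : (1 - U * Uᴴ)ᴴ = 1 - U * Uᴴ :=
    (isHermitian_one.sub (isHermitian_mul_conjTranspose_self U)).eq
  -- `P + t Q = (1 - U Uᴴ) (P + U Uᴴ + t Q) (1 - U Uᴴ)`
  convert hGQ.conjTranspose_mul_mul_same (1 - U * Uᴴ) using 1
  rw [hR]
  have hPproj : P * (U * Uᴴ) = 0 := by rw [← Matrix.mul_assoc, hPU, Matrix.zero_mul]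
  have hQproj : Q * (U * Uᴴ) = 0 := by rw [← Matrix.mul_assoc, hQU, Matrix.zero_mul]
  simp only [mul_sub, sub_mul, add_mul, mul_add, mul_one, one_mul, hproj, hPproj, hQproj,
    hP.isHermitian.mul_conjTranspose_mul_eq_zero hPU, hQ.mul_conjTranspose_mul_eq_zero hQU,
    Matrix.smul_mul, Matrix.mul_smul, smul_zero, Matrix.zero_mul]
  abel

end Matrix

lemma IsExtreme.preimage {R V W : Type*} [Ring R] [PartialOrder R] [IsOrderedRing R]
    [AddCommGroup V] [Module R V] [AddCommGroup W] [Module R W] (f : V →ᵃ[R] W) {A B : Set W}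
    (h : IsExtreme R A B) : IsExtreme R (f ⁻¹' A) (f ⁻¹' B) :=
  ⟨Set.preimage_mono h.subset, fun _ hx _ hy _ hz hzxy => h.left_mem_of_mem_openSegment hx hy hz
    (image_openSegment R f _ _ ▸ Set.mem_image_of_mem f hzxy)⟩

section Spectrahedron

variable {E n k 𝕜 : Type*} [AddCommGroup E] [Module ℝ E] [Fintype n] [RCLike 𝕜]

variable (f : E →ᵃ[ℝ] Matrix n n 𝕜) (U : Matrix n k 𝕜)

def spectrahedron : Set E := f ⁻¹' {A | A.PosSemidef}

noncomputable def annihilatorSubspace : AffineSubspace ℝ E :=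
  (LinearMap.ker (mulRightLinearMap n ℝ U)).toAffineSubspace.comap f

variable {f U}

lemma mem_annihilatorSubspace {y : E} : y ∈ annihilatorSubspace f U ↔ f y * U = 0 := Iff.rfl

lemma linear_sub_mul_eq_zero {y z : E} (hy : y ∈ annihilatorSubspace f U)
    (hz : z ∈ annihilatorSubspace f U) : f.linear (y - z) * U = 0 := by
  rw [← vsub_eq_sub, f.linearMap_vsub, vsub_eq_sub, Matrix.sub_mul, mem_annihilatorSubspace.mp hy,
    mem_annihilatorSubspace.mp hz, sub_zero]

variable [Fintype k]

lemma isFaceOf_spectrahedron_inter_annihilatorSubspace :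
    IsFaceOf (spectrahedron f) (spectrahedron f ∩ annihilatorSubspace f U) :=
  ⟨(convex_setOf_posSemidef.affine_preimage f).inter (annihilatorSubspace f U).convex,
    (isExtreme_setOf_posSemidef_mul_eq_zero U).preimage f⟩

variable [DecidableEq n] [DecidableEq k]

lemma exists_pos_smul_vadd_mem_spectrahedron (hf : ∀ y, (f y).IsHermitian) {x : E}
    (hx : x ∈ spectrahedron f) (hU : Uᴴ * U = 1)
    (hker : LinearMap.ker (f x).mulVecLin = LinearMap.range U.mulVecLin) {d : E}
    (hd : f.linear d * U = 0) : ∃ t : ℝ, 0 < t ∧ t • d + x ∈ spectrahedron f := by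
  have hdx : f.linear d = f (d + x) - f x := by
    rw [← vsub_eq_sub, ← f.linearMap_vsub, vsub_eq_sub, add_sub_cancel_right]
  obtain ⟨t, ht, hpsd⟩ :=
    PosSemidef.exists_pos_posSemidef_add_smul hx (hdx ▸ (hf _).sub (hf x)) hU hker hd
  refine ⟨t, ht, ?_⟩
  show (f (t • d +ᵥ x)).PosSemidef
  rwa [f.map_vadd, f.linear.map_smul, vadd_eq_add, add_comm]

lemma spectrahedron_inter_annihilatorSubspace_subset (hf : ∀ y, (f y).IsHermitian) {x : E}
    (hx : x ∈ spectrahedron f) (hU : Uᴴ * U = 1)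
    (hker : LinearMap.ker (f x).mulVecLin = LinearMap.range U.mulVecLin) {B : Set E}
    (hB : IsFaceOf (spectrahedron f) B) (hxB : x ∈ B) :
    spectrahedron f ∩ annihilatorSubspace f U ⊆ B := by
  rintro y ⟨hyF, hyL⟩
  have hxL : x ∈ annihilatorSubspace f U := mul_eq_zero_of_range_le_ker hker.ge
  obtain ⟨t, ht, hz⟩ := exists_pos_smul_vadd_mem_spectrahedron hf hx hU hker
    (linear_sub_mul_eq_zero hxL hyL)
  refine hB.2.left_mem_of_mem_openSegment hyF hz hxB ⟨t / (1 + t), 1 / (1 + t), by positivity,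
    by positivity, by field_simp; ring, ?_⟩
  match_scalars <;> field_simp <;> ring

lemma affineSpan_spectrahedron_inter_annihilatorSubspace (hf : ∀ y, (f y).IsHermitian) {x : E}
    (hx : x ∈ spectrahedron f) (hU : Uᴴ * U = 1)
    (hker : LinearMap.ker (f x).mulVecLin = LinearMap.range U.mulVecLin) :
    affineSpan ℝ (spectrahedron f ∩ annihilatorSubspace f U) = annihilatorSubspace f U := by
  have hxL : x ∈ annihilatorSubspace f U := mul_eq_zero_of_range_le_ker hker.ge
  refine le_antisymm (affineSpan_le.mpr Set.inter_subset_right) fun y hyL => ?_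
  obtain ⟨t, ht, hz⟩ := exists_pos_smul_vadd_mem_spectrahedron hf hx hU hker
    (linear_sub_mul_eq_zero hyL hxL)
  have hzL : t • (y - x) + x ∈ annihilatorSubspace f U :=
    AffineSubspace.smul_vsub_vadd_mem _ t hyL hxL hxL
  have hxS : x ∈ affineSpan ℝ (spectrahedron f ∩ annihilatorSubspace f U) :=
    subset_affineSpan ℝ _ ⟨hx, hxL⟩
  have hzS : t • (y - x) + x ∈ affineSpan ℝ (spectrahedron f ∩ annihilatorSubspace f U) :=
    subset_affineSpan ℝ _ ⟨hz, hzL⟩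
  have hy : t⁻¹ • (t • (y - x) + x -ᵥ x) +ᵥ x = y := by
    rw [vsub_eq_sub, vadd_eq_add, add_sub_cancel_right, smul_smul, inv_mul_cancel₀ ht.ne',
      one_smul, sub_add_cancel]
  exact hy ▸ AffineSubspace.smul_vsub_vadd_mem _ t⁻¹ hzS hxS hxS

lemma IsMinFaceOf.eq_spectrahedron_inter_annihilatorSubspace (hf : ∀ y, (f y).IsHermitian)
    {x : E} (hx : x ∈ spectrahedron f) (hU : Uᴴ * U = 1)
    (hker : LinearMap.ker (f x).mulVecLin = LinearMap.range U.mulVecLin) {A : Set E}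
    (hA : IsMinFaceOf (spectrahedron f) {x} A) :
    A = spectrahedron f ∩ annihilatorSubspace f U :=
  (hA.2.2 _ isFaceOf_spectrahedron_inter_annihilatorSubspace
    (Set.singleton_subset_iff.mpr ⟨hx, mul_eq_zero_of_range_le_ker hker.ge⟩)).antisymm
    (spectrahedron_inter_annihilatorSubspace_subset hf hx hU hker hA.1 (hA.2.1 rfl))

end Spectrahedron

section Pencil

variable {ι n 𝕜 : Type*} [Fintype ι] [RCLike 𝕜]

noncomputable def pencil (X : Matrix n n 𝕜) (M : ι → Matrix n n 𝕜) :
    (ι → ℝ) →ᵃ[ℝ] Matrix n n 𝕜 where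
  toFun y := X + ∑ i, y i • M i
  linear := Fintype.linearCombination ℝ M
  map_vadd' y d := by
    simp only [vadd_eq_add, Pi.add_apply, add_smul, Finset.sum_add_distrib,
      Fintype.linearCombination_apply]
    abel

lemma isHermitian_pencil {X : Matrix n n 𝕜} {M : ι → Matrix n n 𝕜} (hX : X.IsHermitian)
    (hM : ∀ i, (M i).IsHermitian) (y : ι → ℝ) : (pencil X M y).IsHermitian :=
  hX.add (isSelfAdjoint_sum _ fun i _ => (hM i).smul (IsSelfAdjoint.all (y i)))

end Pencil

theorem stmt11 (m N k : ℕ) (X : Matrix (Fin N) (Fin N) ℝ) (hX : X.IsSymm)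
    (M : Fin m → Matrix (Fin N) (Fin N) ℝ) (hM : ∀ i, (M i).IsSymm)
    (F : Set (Fin m → ℝ))
    (hF : F = {y : Fin m → ℝ | (X + ∑ i, y i • M i).PosSemidef})
    (x : Fin m → ℝ) (hx : x ∈ F)
    (U : Matrix (Fin N) (Fin k) ℝ) (hUU : Uᵀ * U = 1)
    (hUnull : ∀ v : Fin N → ℝ,
      (X + ∑ i, x i • M i) *ᵥ v = 0 ↔
        v ∈ Submodule.span ℝ (Set.range fun c => fun i => U i c)) :
    ∀ A : Set (Fin m → ℝ), IsMinFaceOf F {x} A →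
      (affineSpan ℝ A : Set (Fin m → ℝ)) =
        {y : Fin m → ℝ | (X + ∑ i, y i • M i) * U = 0} := by
  intro A hA
  subst hF
  have hf := isHermitian_pencil (isHermitian_iff_isSymm.mpr hX)
    fun i => isHermitian_iff_isSymm.mpr (hM i)
  have hU : Uᴴ * U = 1 := by rwa [conjTranspose_eq_transpose_of_trivial]
  have hker : LinearMap.ker (pencil X M x).mulVecLin = LinearMap.range U.mulVecLin := by
    ext v
    rw [LinearMap.mem_ker, mulVecLin_apply, range_mulVecLin]
    exact hUnull v
  rw [hA.eq_spectrahedron_inter_annihilatorSubspace hf hx hU hker,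
    affineSpan_spectrahedron_inter_annihilatorSubspace hf hx hU hker]
  rfl
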